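/- arXiv:1312.1516 — 2 statements merged into one kernel-verified Lean document; each statement's English description precedes it below -/
import Mathlib

section
/- With notation as before, suppose W_{ψ,φ} is bounded on BMOA. Then limsup_{|φ(a)|→1} ‖W_{ψ,φ} f_a‖_* ≤ 2 · limsup_{n→∞} ‖ψ·φⁿ‖_*, where f_a = σ_{φ(a)} - φ(a). Precisely: for every ε > 0 there is r < 1 such that for all a ∈ 𝔻 with |φ(a)| > r, ‖W_{ψ,φ} f_a‖_* ≤ 2·limsup_{n→∞} ‖ψ·φⁿ‖_* + ε. -/
open Complex MeasureTheory Filter Set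

noncomputable section

/-- The open unit disc in `ℂ`. -/
def UD : Set ℂ := Metric.ball 0 1

/-- The disc automorphism `σ_a(z) = (a - z)/(1 - conj a · z)` exchanging `0` and `a`. -/
def mob (a z : ℂ) : ℂ := (a - z) / (1 - (starRingEnd ℂ) a * z)

/-- The `p`-th integral mean of `f` on the circle of radius `r`. -/
def meanp (p : ℝ) (f : ℂ → ℂ) (r : ℝ) : ℝ :=
  (∫ θ in (0:ℝ)..2 * Real.pi, ‖f ((r : ℂ) * Complex.exp (θ * Complex.I))‖ ^ p) / (2 * Real.pi)

/-- The `H^p` norm of `f`, as the supremum of the integral means over radii `r < 1`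
(for analytic `f` the means are nondecreasing in `r`, so this equals the limit as `r → 1`). -/
def hpNorm (p : ℝ) (f : ℂ → ℂ) : ℝ := ⨆ r : Ico (0:ℝ) 1, (meanp p f r) ^ (1 / p)

/-- The `H²` norm. -/
def h2 (f : ℂ → ℂ) : ℝ := hpNorm 2 f

/-- Membership in the Hardy space `H²`: analytic on the disc with bounded integral means. -/
def MemH2 (f : ℂ → ℂ) : Prop :=
  AnalyticOn ℂ f UD ∧ BddAbove (range fun r : Ico (0:ℝ) 1 => (meanp 2 f r) ^ ((1:ℝ) / 2))

/-- The BMOA seminorm `‖f‖_* = sup_{a ∈ 𝔻} ‖f ∘ σ_a - f(a)‖₂`. -/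
def bmoaSemi (f : ℂ → ℂ) : ℝ := ⨆ a : UD, h2 (fun z => f (mob a z) - f (a : ℂ))

/-- Membership in BMOA: in `H²` with bounded seminorm. -/
def MemBMOA (f : ℂ → ℂ) : Prop :=
  MemH2 f ∧ BddAbove (range fun a : UD => h2 (fun z => f (mob a z) - f (a : ℂ)))

/-- The BMOA norm `‖f‖ = |f(0)| + ‖f‖_*`. -/
def bmoaNorm (f : ℂ → ℂ) : ℝ := ‖f 0‖ + bmoaSemi f

/-- `L(w) = log (2/(1 - |w|²))`. -/
def Lfun (w : ℂ) : ℝ := Real.log (2 / (1 - ‖w‖ ^ 2))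

/-- An analytic self-map of the unit disc. -/
def SelfMap (φ : ℂ → ℂ) : Prop := AnalyticOn ℂ φ UD ∧ MapsTo φ UD UD

/-- The weighted composition operator `W_{ψ,φ} f = ψ · (f ∘ φ)`. -/
def wcomp (ψ φ f : ℂ → ℂ) : ℂ → ℂ := fun z => ψ z * f (φ z)

/-- `α(a) = |ψ(a)| · ‖σ_{φ(a)} ∘ φ ∘ σ_a‖₂`. -/
def alphaF (ψ φ : ℂ → ℂ) (a : ℂ) : ℝ := ‖ψ a‖ * h2 (fun z => mob (φ a) (φ (mob a z)))

/-- `β(a) = L(φ(a)) · ‖ψ ∘ σ_a - ψ(a)‖₂`. -/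
def betaF (ψ φ : ℂ → ℂ) (a : ℂ) : ℝ := Lfun (φ a) * h2 (fun z => ψ (mob a z) - ψ a)

/-- `W_{ψ,φ}` is a bounded operator on BMOA. -/
def BoundedOnBMOA (ψ φ : ℂ → ℂ) : Prop :=
  ∃ M : ℝ, 0 ≤ M ∧ ∀ f, MemBMOA f →
    MemBMOA (wcomp ψ φ f) ∧ bmoaNorm (wcomp ψ φ f) ≤ M * bmoaNorm f

/-- The operator norm of an operator on BMOA. -/
def opNormBMOA (T : (ℂ → ℂ) → (ℂ → ℂ)) : ℝ :=
  sInf {M : ℝ | 0 ≤ M ∧ ∀ f, MemBMOA f → bmoaNorm (T f) ≤ M * bmoaNorm f}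

/-- A linear operator mapping BMOA into BMOA. -/
def LinOnBMOA (K : (ℂ → ℂ) → (ℂ → ℂ)) : Prop :=
  (∀ f, MemBMOA f → MemBMOA (K f)) ∧
  (∀ f g, MemBMOA f → MemBMOA g → ∀ c : ℂ,
    K (fun z => f z + c * g z) = fun z => K f z + c * K g z)

/-- A compact operator on BMOA: bounded sequences are mapped to sequences with
a Cauchy (in BMOA norm) subsequence. -/
def CompactOnBMOA (K : (ℂ → ℂ) → (ℂ → ℂ)) : Prop :=
  LinOnBMOA K ∧ ∀ u : ℕ → (ℂ → ℂ), (∀ n, MemBMOA (u n) ∧ bmoaNorm (u n) ≤ 1) →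
    ∃ s : ℕ → ℕ, StrictMono s ∧ ∀ ε > (0:ℝ), ∃ N, ∀ m ≥ N, ∀ n ≥ N,
      bmoaNorm (fun z => K (u (s m)) z - K (u (s n)) z) ≤ ε

/-- The essential norm of an operator on BMOA: distance to the compact operators. -/
def essNormBMOA (T : (ℂ → ℂ) → (ℂ → ℂ)) : ℝ :=
  sInf {M : ℝ | 0 ≤ M ∧ ∃ K, CompactOnBMOA K ∧
    ∀ f, MemBMOA f → bmoaNorm (fun z => T f z - K f z) ≤ M * bmoaNorm f}

/-- Membership in VMOA: vanishing mean oscillation near the boundary. -/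
def MemVMOA (f : ℂ → ℂ) : Prop :=
  MemBMOA f ∧ ∀ ε > (0:ℝ), ∃ r : ℝ, r < 1 ∧ ∀ a ∈ UD, r < ‖a‖ →
    h2 (fun z => f (mob a z) - f a) ≤ ε

/-- `W_{ψ,φ}` is a bounded operator on VMOA. -/
def BoundedOnVMOA (ψ φ : ℂ → ℂ) : Prop :=
  ∃ M : ℝ, 0 ≤ M ∧ ∀ f, MemVMOA f →
    MemVMOA (wcomp ψ φ f) ∧ bmoaNorm (wcomp ψ φ f) ≤ M * bmoaNorm f

/-- A compact operator on VMOA. -/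
def CompactOnVMOA (K : (ℂ → ℂ) → (ℂ → ℂ)) : Prop :=
  ((∀ f, MemVMOA f → MemVMOA (K f)) ∧
    (∀ f g, MemVMOA f → MemVMOA g → ∀ c : ℂ,
      K (fun z => f z + c * g z) = fun z => K f z + c * K g z)) ∧
  ∀ u : ℕ → (ℂ → ℂ), (∀ n, MemVMOA (u n) ∧ bmoaNorm (u n) ≤ 1) →
    ∃ s : ℕ → ℕ, StrictMono s ∧ ∀ ε > (0:ℝ), ∃ N, ∀ m ≥ N, ∀ n ≥ N,
      bmoaNorm (fun z => K (u (s m)) z - K (u (s n)) z) ≤ ε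

/-- The essential norm of an operator on VMOA. -/
def essNormVMOA (T : (ℂ → ℂ) → (ℂ → ℂ)) : ℝ :=
  sInf {M : ℝ | 0 ≤ M ∧ ∃ K, CompactOnVMOA K ∧
    ∀ f, MemVMOA f → bmoaNorm (fun z => T f z - K f z) ≤ M * bmoaNorm f}

/-- `limsup_{|φ(a)| → 1} β(a) = inf_{r < 1} sup {β(a) : a ∈ 𝔻, |φ(a)| > r}`
(interpreted as `0` if `sup_a |φ(a)| < 1`). -/
def limsupBeta (ψ φ : ℂ → ℂ) : ℝ :=
  ⨅ r : Ico (0:ℝ) 1, sSup (betaF ψ φ '' {a ∈ UD | (r : ℝ) < ‖φ a‖})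

/-- `limsup_{|φ(a)| → 1} α(a)`. -/
def limsupAlpha (ψ φ : ℂ → ℂ) : ℝ :=
  ⨅ r : Ico (0:ℝ) 1, sSup (alphaF ψ φ '' {a ∈ UD | (r : ℝ) < ‖φ a‖})

/-- `s(r) = 2(1 + r)/(1 - r)`. -/
def sFun (r : ℝ) : ℝ := 2 * (1 + r) / (1 - r)

/-- The radial limit of `f` at a boundary point `ξ` (junk value if the limit does not exist). -/
def radLim (f : ℂ → ℂ) (ξ : ℂ) : ℂ :=
  limUnder (nhdsWithin 1 (Iio (1:ℝ))) (fun r : ℝ => f ((r : ℂ) * ξ))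

/-- `f` has radial limit `w` at the boundary point `ξ`. -/
def HasRadialLimit (f : ℂ → ℂ) (ξ w : ℂ) : Prop :=
  Tendsto (fun r : ℝ => f ((r : ℂ) * ξ)) (nhdsWithin 1 (Iio (1:ℝ))) (nhds w)

/-- The test functions `f_a = σ_{φ(a)} - φ(a)`. -/
def testF (φ : ℂ → ℂ) (a : ℂ) : ℂ → ℂ := fun z => mob (φ a) z - φ a

/-- `h_a(z) = log (2/(1 - conj(φ(a)) z))` (principal branch). -/
def hFun (φ : ℂ → ℂ) (a z : ℂ) : ℂ := Complex.log (2 / (1 - (starRingEnd ℂ) (φ a) * z))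

/-- `g_a = h_a² / h_a(φ(a))`. -/
def gFun (φ : ℂ → ℂ) (a z : ℂ) : ℂ := (hFun φ a z) ^ 2 / hFun φ a (φ a)

end

/-!
With `b = φ a`, the geometric series of `σ_b - b` gives, on the disc,
`W_{ψ,φ} f_a = (‖b‖² - 1) ∑ conj bⁿ ψ φⁿ⁺¹`. The BMOA seminorm is countably subadditive along
such pointwise series: on each circle the square mean is an `L²` seminorm (`eLpNorm`), so
Minkowski and Fatou apply after composing with `σ_c`. Hence
`‖W f_a‖_* ≤ (1 - ‖b‖²) ∑ ‖b‖ⁿ ‖ψ φⁿ⁺¹‖_*`. Boundedness of `W` (with constant `M`) on the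
monomials `zⁿ⁺¹`, of BMOA norm at most `2`, bounds every `‖ψ φⁿ⁺¹‖_*` by `2M`; splitting the sum
at an `N` past which `‖ψ φⁿ‖_* < L + ε/4` (`L` the limsup), the head is `O(N (1 - ‖b‖))` and the
tail is at most `(1 + ‖b‖)(L + ε/4)`.

Since `h2` is a supremum with junk value `0` when unbounded, comparing one circle mean of
`g ∘ σ_c - g c` with `‖g‖_*` needs these means to be bounded; for `g ∈ H²` this follows from a
Littlewood-type subordination estimate proved with the Poisson integral formula.
-/

open Metric Real ComplexConjugate

lemma eLpNorm_le_tsum_of_hasSum {α E : Type*} [MeasurableSpace α] {μ : Measure α}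
    [NormedAddCommGroup E] {p : ENNReal} (hp : 1 ≤ p) {f : ℕ → α → E} {F : α → E}
    (hf : ∀ n, AEStronglyMeasurable (f n) μ) (hF : ∀ᵐ x ∂μ, HasSum (fun n => f n x) (F x)) :
    eLpNorm F p μ ≤ ∑' n, eLpNorm (f n) p μ := by
  have hpartial : ∀ N, eLpNorm (∑ n ∈ Finset.range N, f n) p μ ≤ ∑' n, eLpNorm (f n) p μ :=
    fun N => (eLpNorm_sum_le (fun n _ => hf n) hp).trans (ENNReal.sum_le_tsum _)
  calc eLpNorm F p μ
      ≤ atTop.liminf fun N => eLpNorm (∑ n ∈ Finset.range N, f n) p μ :=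
        Lp.eLpNorm_lim_le_liminf_eLpNorm
          (fun N => Finset.aestronglyMeasurable_sum _ fun n _ => hf n) F
          (hF.mono fun x hx => by simpa only [Finset.sum_apply] using hx.tendsto_sum_nat)
    _ ≤ ∑' n, eLpNorm (f n) p μ := liminf_le_of_le ⟨0, by simp⟩ fun b hb => by
        obtain ⟨N, hN⟩ := eventually_atTop.mp hb
        exact (hN N le_rfl).trans (hpartial N)

lemma ContinuousOn.comp_circleMap {E : Type*} [TopologicalSpace E] {f : ℂ → E} {c : ℂ} {R : ℝ}
    (hf : ContinuousOn f (sphere c |R|)) : Continuous fun θ => f (circleMap c R θ) :=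
  hf.comp_continuous (continuous_circleMap c R) (circleMap_mem_sphere' c R)

lemma norm_circleAverage_le (f : ℂ → ℂ) (c : ℂ) (R : ℝ) :
    ‖circleAverage f c R‖ ≤ circleAverage (fun z => ‖f z‖) c R := by
  simp only [circleAverage_def, norm_smul, smul_eq_mul, norm_inv, Real.norm_of_nonneg two_pi_pos.le]
  exact mul_le_mul_of_nonneg_left
    (intervalIntegral.norm_integral_le_integral_norm two_pi_pos.le) (by positivity)

lemma circleAverage_circleAverage_swap {F : ℂ → ℂ → ℝ} {c c' : ℂ} {r ρ : ℝ}
    (hF : Continuous fun p : ℝ × ℝ => F (circleMap c r p.1) (circleMap c' ρ p.2)) :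
    circleAverage (fun z => circleAverage (F z) c' ρ) c r
      = circleAverage (fun ξ => circleAverage (fun z => F z ξ) c r) c' ρ := by
  simp only [circleAverage_def, smul_eq_mul, intervalIntegral.integral_const_mul]
  rw [intervalIntegral_intervalIntegral_swap]
  exact (hF.continuousOn.integrableOn_compact (isCompact_uIcc.prod isCompact_uIcc)).mono_set
    (prod_mono uIoc_subset_uIcc uIoc_subset_uIcc)

lemma circleIntegrable_circleAverage {F : ℂ → ℂ → ℝ} {c c' : ℂ} {r ρ : ℝ}
    (hF : Continuous fun p : ℝ × ℝ => F (circleMap c r p.1) (circleMap c' ρ p.2)) :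
    CircleIntegrable (fun z => circleAverage (F z) c' ρ) c r :=
  ((intervalIntegral.continuous_parametric_intervalIntegral_of_continuous' hF 0 (2 * π)).const_smul
    (2 * π)⁻¹).intervalIntegrable _ _

lemma Continuous.poissonKernel {X : Type*} [TopologicalSpace X] {c : ℂ} {u v : X → ℂ}
    (hu : Continuous u) (hv : Continuous v) (huv : ∀ x, u x ≠ v x) :
    Continuous fun x => poissonKernel c (u x) (v x) := by
  simp only [poissonKernel_def]
  refine .div (by fun_prop) (by fun_prop) fun x => ?_
  simpa [sub_eq_zero] using (huv x).symm

lemma poissonKernel_nonneg {ρ : ℝ} {w ξ : ℂ} (hw : w ∈ ball (0:ℂ) ρ) (hξ : ξ ∈ sphere (0:ℂ) ρ) :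
    0 ≤ poissonKernel 0 w ξ := by
  rw [mem_ball_zero_iff] at hw
  rw [mem_sphere_zero_iff_norm] at hξ
  simp only [poissonKernel_def, sub_zero, hξ]
  exact div_nonneg (by nlinarith [norm_nonneg w]) (sq_nonneg _)

lemma poissonKernel_le {ρ : ℝ} {w ξ : ℂ} (hw : w ∈ ball (0:ℂ) ρ) (hξ : ξ ∈ sphere (0:ℂ) ρ) :
    poissonKernel 0 w ξ ≤ (ρ + ‖w‖) / (ρ - ‖w‖) := by
  simpa [poissonKernel_eq_re_herglotzRieszKernel, herglotzRieszKernel_def]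
    using re_herglotzRieszKernel_le hξ hw

lemma norm_le_circleAverage_poissonKernel_mul {h : ℂ → ℂ} {ρ : ℝ} {w : ℂ}
    (hh : DiffContOnCl ℂ h (ball 0 ρ)) (hw : w ∈ ball 0 ρ) :
    ‖h w‖ ≤ circleAverage (fun ξ => poissonKernel 0 w ξ * ‖h ξ‖) 0 ρ := by
  have hρ : 0 < ρ := pos_of_mem_ball hw
  rw [← hh.circleAverage_poissonKernel_smul hw]
  refine (norm_circleAverage_le _ _ _).trans_eq (circleAverage_congr_sphere fun ξ hξ => ?_)
  rw [abs_of_pos hρ] at hξ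
  simp only [Pi.smul_apply', norm_smul, Real.norm_of_nonneg (poissonKernel_nonneg hw hξ)]

lemma circleAverage_poissonKernel_comp {τ : ℂ → ℂ} {r ρ : ℝ} {ξ : ℂ} (hr : 0 ≤ r)
    (hτ : DifferentiableOn ℂ τ (closedBall 0 r)) (hτρ : MapsTo τ (closedBall 0 r) (ball 0 ρ))
    (hξ : ξ ∈ sphere (0:ℂ) ρ) :
    circleAverage (fun z => poissonKernel 0 (τ z) ξ) 0 r = poissonKernel 0 (τ 0) ξ := by
  have hne : ∀ z ∈ closedBall (0:ℂ) r, ξ - τ z ≠ 0 := fun z hz => by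
    have h1 := mem_ball_zero_iff.mp (hτρ hz)
    rw [mem_sphere_zero_iff_norm] at hξ
    exact sub_ne_zero.mpr fun h => by rw [← h, hξ] at h1; exact lt_irrefl _ h1
  have hG : DifferentiableOn ℂ (fun z => (ξ + τ z) / (ξ - τ z)) (closedBall 0 r) :=
    ((differentiableOn_const ξ).add hτ).div ((differentiableOn_const ξ).sub hτ) hne
  have hPG : ∀ z, poissonKernel 0 (τ z) ξ = reCLM ((ξ + τ z) / (ξ - τ z)) := fun z => by
    simp [poissonKernel_eq_re_herglotzRieszKernel, herglotzRieszKernel_def]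
  simp only [hPG]
  rw [← Function.comp_def, reCLM.circleAverage_comp_comm, DiffContOnCl.circleAverage]
  · rw [abs_of_nonneg hr]
    exact hG.diffContOnCl_ball subset_rfl
  · exact (hG.continuousOn.mono sphere_subset_closedBall).circleIntegrable hr

/- Littlewood-type subordination: average `‖h w‖ ≤ P[‖h‖](w)` over `w = τ z` and swap the
averages; `z ↦ P(τ z, ξ)` is the real part of a holomorphic function, so it averages to
`P(τ 0, ξ)`, and Harnack bounds that by `(ρ + ‖τ 0‖) / (ρ - ‖τ 0‖)`. -/
theorem circleAverage_norm_comp_le {h τ : ℂ → ℂ} {r ρ : ℝ} (hr : 0 ≤ r)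
    (hh : DifferentiableOn ℂ h (closedBall 0 ρ)) (hτ : DifferentiableOn ℂ τ (closedBall 0 r))
    (hτρ : MapsTo τ (closedBall 0 r) (ball 0 ρ)) :
    circleAverage (fun z => ‖h (τ z)‖) 0 r
      ≤ (ρ + ‖τ 0‖) / (ρ - ‖τ 0‖) * circleAverage (fun ξ => ‖h ξ‖) 0 ρ := by
  have hτ0 : τ 0 ∈ ball 0 ρ := hτρ (mem_closedBall_self hr)
  have hρ : 0 < ρ := pos_of_mem_ball hτ0
  have hsr : sphere (0:ℂ) |r| ⊆ closedBall 0 r := by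
    rw [abs_of_nonneg hr]; exact sphere_subset_closedBall
  have hsρ : sphere (0:ℂ) |ρ| = sphere 0 ρ := by rw [abs_of_pos hρ]
  have hsρ' : sphere (0:ℂ) |ρ| ⊆ closedBall 0 ρ := hsρ ▸ sphere_subset_closedBall
  have hξ : ∀ t, circleMap 0 ρ t ∈ sphere (0:ℂ) ρ := circleMap_mem_sphere 0 hρ.le
  have hτc := (hτ.continuousOn.mono hsr).comp_circleMap
  have hhc := (hh.continuousOn.norm.mono hsρ').comp_circleMap
  have hne : ∀ {w}, w ∈ ball (0:ℂ) ρ → ∀ t, w ≠ circleMap 0 ρ t := fun hw t h =>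
    (mem_sphere_zero_iff_norm.mp (hξ t) ▸ h ▸ mem_ball_zero_iff.mp hw).false
  have hK : Continuous fun p : ℝ × ℝ =>
      poissonKernel 0 (τ (circleMap 0 r p.1)) (circleMap 0 ρ p.2) * ‖h (circleMap 0 ρ p.2)‖ :=
    ((hτc.comp continuous_fst).poissonKernel ((continuous_circleMap 0 ρ).comp continuous_snd)
      fun p => hne (hτρ (hsr (circleMap_mem_sphere' 0 r p.1))) p.2).mul (hhc.comp continuous_snd)
  have hK0 : Continuous fun t => poissonKernel 0 (τ 0) (circleMap 0 ρ t) * ‖h (circleMap 0 ρ t)‖ :=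
    (continuous_const.poissonKernel (continuous_circleMap 0 ρ) (hne hτ0)).mul hhc
  calc circleAverage (fun z => ‖h (τ z)‖) 0 r
      ≤ circleAverage (fun z => circleAverage (fun ξ => poissonKernel 0 (τ z) ξ * ‖h ξ‖) 0 ρ) 0 r :=
        circleAverage_mono
          ((hh.continuousOn.norm.comp hτ.continuousOn (hτρ.mono_right ball_subset_closedBall)).mono
            hsr).circleIntegrable'
          (circleIntegrable_circleAverage hK) fun z hz =>
            norm_le_circleAverage_poissonKernel_mul (hh.diffContOnCl_ball subset_rfl) (hτρ (hsr hz))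
    _ = circleAverage
          (fun ξ => circleAverage (fun z => poissonKernel 0 (τ z) ξ) 0 r * ‖h ξ‖) 0 ρ := by
        rw [circleAverage_circleAverage_swap hK]
        refine circleAverage_congr_sphere fun ξ _ => ?_
        simp only [mul_comm _ ‖h ξ‖, ← smul_eq_mul (a := ‖h ξ‖), circleAverage_fun_smul]
    _ = circleAverage (fun ξ => poissonKernel 0 (τ 0) ξ * ‖h ξ‖) 0 ρ :=
        circleAverage_congr_sphere fun ξ hξ => by
          rw [circleAverage_poissonKernel_comp hr hτ hτρ (hsρ ▸ hξ)]
    _ ≤ circleAverage (fun ξ => (ρ + ‖τ 0‖) / (ρ - ‖τ 0‖) * ‖h ξ‖) 0 ρ :=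
        circleAverage_mono (hK0.intervalIntegrable _ _)
          ((continuous_const.mul hhc).intervalIntegrable _ _) fun ξ hξ =>
            mul_le_mul_of_nonneg_right (poissonKernel_le hτ0 (hsρ ▸ hξ)) (norm_nonneg _)
    _ = (ρ + ‖τ 0‖) / (ρ - ‖τ 0‖) * circleAverage (fun ξ => ‖h ξ‖) 0 ρ := by
        simp only [← smul_eq_mul (a := (ρ + ‖τ 0‖) / (ρ - ‖τ 0‖)), circleAverage_fun_smul]

lemma mem_UD {z : ℂ} : z ∈ UD ↔ ‖z‖ < 1 := mem_ball_zero_iff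

lemma sphere_subset_UD {r : ℝ} (hr : r ∈ Ico (0:ℝ) 1) : sphere (0:ℂ) |r| ⊆ UD := fun z hz => by
  rw [mem_UD, mem_sphere_zero_iff_norm.mp hz, abs_of_nonneg hr.1]
  exact hr.2

lemma one_sub_conj_mul_ne_zero {a z : ℂ} (ha : ‖a‖ < 1) (hz : ‖z‖ ≤ 1) :
    1 - conj a * z ≠ 0 := by
  refine sub_ne_zero.mpr fun h => ?_
  have : ‖conj a * z‖ < 1 := by
    rw [norm_mul, RCLike.norm_conj]
    nlinarith [norm_nonneg a, norm_nonneg z]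
  rw [← h, norm_one] at this
  exact lt_irrefl _ this

lemma differentiableOn_mob {a : ℂ} (ha : ‖a‖ < 1) : DifferentiableOn ℂ (mob a) (closedBall 0 1) :=
  ((differentiableOn_const a).sub differentiableOn_id).div
    ((differentiableOn_const 1).sub ((differentiableOn_const _).mul differentiableOn_id))
    fun _ hz => one_sub_conj_mul_ne_zero ha (mem_closedBall_zero_iff.mp hz)

lemma mob_zero (a : ℂ) : mob a 0 = a := by simp [mob]

lemma normSq_one_sub_conj_mul_sub_normSq_sub (a z : ℂ) :
    normSq (1 - conj a * z) - normSq (a - z) = (1 - normSq a) * (1 - normSq z) := by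
  simp only [normSq_apply, sub_re, sub_im, mul_re, mul_im, one_re, one_im, conj_re, conj_im]
  ring

lemma mob_mem_UD {a z : ℂ} (ha : a ∈ UD) (hz : z ∈ UD) : mob a z ∈ UD := by
  rw [mem_UD] at *
  have hd := one_sub_conj_mul_ne_zero ha hz.le
  have key := normSq_one_sub_conj_mul_sub_normSq_sub a z
  rw [mob, norm_div, div_lt_one (norm_pos_iff.mpr hd), ← sq_lt_sq₀ (norm_nonneg _) (norm_nonneg _)]
  have ha' : normSq a < 1 := by
    rw [normSq_eq_norm_sq]; exact pow_lt_one₀ (norm_nonneg a) ha two_ne_zero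
  have hz' : normSq z < 1 := by
    rw [normSq_eq_norm_sq]; exact pow_lt_one₀ (norm_nonneg z) hz two_ne_zero
  simp only [← normSq_eq_norm_sq]
  nlinarith [mul_pos (sub_pos.mpr ha') (sub_pos.mpr hz')]

lemma hasSum_mob_sub {b w : ℂ} (hb : ‖b‖ < 1) (hw : ‖w‖ < 1) :
    HasSum (fun n : ℕ => ((‖b‖ ^ 2 - 1 : ℝ) : ℂ) * conj b ^ n * w ^ (n + 1)) (mob b w - b) := by
  have hd := one_sub_conj_mul_ne_zero hb hw.le
  have hgeo := (hasSum_geometric_of_norm_lt_one (ξ := conj b * w) (by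
    rw [norm_mul, RCLike.norm_conj]; nlinarith [norm_nonneg b, norm_nonneg w])).mul_left
    (((‖b‖ ^ 2 - 1 : ℝ) : ℂ) * w)
  have hmob : mob b w - b = ((‖b‖ ^ 2 - 1 : ℝ) : ℂ) * w * (1 - conj b * w)⁻¹ := by
    rw [mob, eq_mul_inv_iff_mul_eq₀ hd, sub_mul, div_mul_cancel₀ _ hd]
    push_cast
    rw [← Complex.mul_conj']
    ring
  rw [hmob]
  exact hgeo.congr_fun fun n => by ring

lemma meanp_two_eq_circleAverage (f : ℂ → ℂ) (r : ℝ) :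
    meanp 2 f r = circleAverage (fun z => ‖f z‖ ^ 2) 0 r := by
  simp only [meanp, circleAverage, circleMap_zero, smul_eq_mul, Real.rpow_two]
  ring

lemma meanp_two_nonneg (f : ℂ → ℂ) (r : ℝ) : 0 ≤ meanp 2 f r := by
  rw [meanp_two_eq_circleAverage]
  exact circleAverage_nonneg_of_nonneg fun _ _ => by positivity

lemma meanp_two_const (k : ℂ) (r : ℝ) : meanp 2 (fun _ => k) r = ‖k‖ ^ 2 := by
  rw [meanp_two_eq_circleAverage, circleAverage_const]

lemma meanp_two_const_mul (c : ℂ) (f : ℂ → ℂ) (r : ℝ) :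
    meanp 2 (fun z => c * f z) r = ‖c‖ ^ 2 * meanp 2 f r := by
  simp only [meanp_two_eq_circleAverage, norm_mul, mul_pow, ← smul_eq_mul (a := ‖c‖ ^ 2),
    circleAverage_fun_smul]

lemma sqrt_meanp_le_of_forall_norm_le {f : ℂ → ℂ} {r C : ℝ} (hC : 0 ≤ C)
    (h : ∀ z ∈ sphere (0:ℂ) |r|, ‖f z‖ ≤ C) : √(meanp 2 f r) ≤ C := by
  rw [meanp_two_eq_circleAverage, Real.sqrt_le_left hC]
  by_cases hi : CircleIntegrable (fun z => ‖f z‖ ^ 2) 0 r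
  · exact circleAverage_mono_on_of_le_circle hi fun z hz =>
      pow_le_pow_left₀ (norm_nonneg _) (h z hz) 2
  · rw [circleAverage.integral_undef hi]
    positivity

local notation "dθ" => volume.restrict (Ioc (0:ℝ) (2 * π))

lemma eLpNorm_circleMap_eq {f : ℂ → ℂ} {r : ℝ} (hf : ContinuousOn f (sphere 0 |r|)) :
    eLpNorm (fun θ => f (circleMap 0 r θ)) 2 dθ = ENNReal.ofReal (√(2 * π) * √(meanp 2 f r)) := by
  have hc := hf.comp_circleMap
  have hL2 : MemLp (fun θ => f (circleMap 0 r θ)) 2 dθ := by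
    rw [memLp_two_iff_integrable_sq_norm hc.aestronglyMeasurable]
    exact (hc.norm.pow 2).integrableOn_Ioc
  rw [hL2.eLpNorm_eq_integral_rpow_norm two_ne_zero ENNReal.ofNat_ne_top,
    ← Real.sqrt_mul two_pi_pos.le]
  congr 1
  simp only [meanp, circleMap_zero, ENNReal.toReal_ofNat,
    ← intervalIntegral.integral_of_le two_pi_pos.le]
  rw [Real.sqrt_eq_rpow, one_div, mul_div_cancel₀ _ two_pi_pos.ne']

lemma sqrt_meanp_two_sub_le {f g : ℂ → ℂ} {r : ℝ} (hf : ContinuousOn f (sphere 0 |r|))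
    (hg : ContinuousOn g (sphere 0 |r|)) :
    √(meanp 2 (fun z => f z - g z) r) ≤ √(meanp 2 f r) + √(meanp 2 g r) := by
  have key : eLpNorm (fun θ => f (circleMap 0 r θ) - g (circleMap 0 r θ)) 2 dθ
      ≤ eLpNorm (fun θ => f (circleMap 0 r θ)) 2 dθ + eLpNorm (fun θ => g (circleMap 0 r θ)) 2 dθ :=
    eLpNorm_sub_le hf.comp_circleMap.aestronglyMeasurable hg.comp_circleMap.aestronglyMeasurable
      one_le_two
  rw [eLpNorm_circleMap_eq (f := fun z => f z - g z) (hf.sub hg), eLpNorm_circleMap_eq hf,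
    eLpNorm_circleMap_eq hg, ← ENNReal.ofReal_add (by positivity) (by positivity),
    ENNReal.ofReal_le_ofReal_iff (by positivity), ← mul_add] at key
  exact le_of_mul_le_mul_left key (Real.sqrt_pos.mpr two_pi_pos)

lemma sqrt_meanp_two_le_tsum {f : ℕ → ℂ → ℂ} {F : ℂ → ℂ} {r : ℝ} {B : ℕ → ℝ}
    (hf : ∀ n, ContinuousOn (f n) (sphere 0 |r|)) (hF : ContinuousOn F (sphere 0 |r|))
    (hsum : ∀ z ∈ sphere (0:ℂ) |r|, HasSum (fun n => f n z) (F z))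
    (hB : ∀ n, √(meanp 2 (f n) r) ≤ B n) (hBs : Summable B) :
    √(meanp 2 F r) ≤ ∑' n, B n := by
  have key := eLpNorm_le_tsum_of_hasSum (μ := dθ) one_le_two
    (fun n => (hf n).comp_circleMap.aestronglyMeasurable)
    (ae_of_all dθ fun θ => hsum _ (circleMap_mem_sphere' 0 r θ))
  simp only [eLpNorm_circleMap_eq hF, eLpNorm_circleMap_eq (hf _)] at key
  have hB0 : ∀ n, 0 ≤ B n := fun n => (Real.sqrt_nonneg _).trans (hB n)
  have hsum_le : ∑' n, ENNReal.ofReal (√(2 * π) * √(meanp 2 (f n) r))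
      ≤ ENNReal.ofReal (√(2 * π) * ∑' n, B n) := by
    rw [← tsum_mul_left,
      ENNReal.ofReal_tsum_of_nonneg (fun n => by positivity [hB0 n]) (hBs.mul_left _)]
    exact ENNReal.tsum_le_tsum fun n =>
      ENNReal.ofReal_le_ofReal (mul_le_mul_of_nonneg_left (hB n) (Real.sqrt_nonneg _))
  have := (ENNReal.ofReal_le_ofReal_iff (mul_nonneg (Real.sqrt_nonneg _) (tsum_nonneg hB0))).mp
    (key.trans hsum_le)
  exact le_of_mul_le_mul_left this (Real.sqrt_pos.mpr two_pi_pos)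

lemma h2_eq_iSup_sqrt_meanp (f : ℂ → ℂ) :
    h2 f = ⨆ r : Ico (0:ℝ) 1, √(meanp 2 f r) := by
  simp only [h2, hpNorm, Real.sqrt_eq_rpow]

lemma h2_nonneg (f : ℂ → ℂ) : 0 ≤ h2 f := by
  rw [h2_eq_iSup_sqrt_meanp]
  exact Real.iSup_nonneg fun _ => Real.sqrt_nonneg _

lemma h2_le_of_forall_le {f : ℂ → ℂ} {C : ℝ} (hC : 0 ≤ C)
    (h : ∀ r ∈ Ico (0:ℝ) 1, √(meanp 2 f r) ≤ C) : h2 f ≤ C := by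
  rw [h2_eq_iSup_sqrt_meanp]
  exact Real.iSup_le (fun r => h r r.2) hC

lemma sqrt_meanp_le_h2 {f : ℂ → ℂ} (hf : BddAbove (range fun r : Ico (0:ℝ) 1 => √(meanp 2 f r)))
    {r : ℝ} (hr : r ∈ Ico (0:ℝ) 1) : √(meanp 2 f r) ≤ h2 f := by
  rw [h2_eq_iSup_sqrt_meanp]
  exact le_ciSup hf ⟨r, hr⟩

lemma MemH2.exists_sqrt_meanp_le {g : ℂ → ℂ} (hg : MemH2 g) :
    ∃ B, ∀ ρ ∈ Ico (0:ℝ) 1, √(meanp 2 g ρ) ≤ B := by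
  obtain ⟨B, hB⟩ := hg.2
  exact ⟨B, fun ρ hρ => by simpa [Real.sqrt_eq_rpow] using hB ⟨⟨ρ, hρ⟩, rfl⟩⟩

lemma h2_le_tsum {G : ℕ → ℂ → ℂ} {c : ℕ → ℂ} {F : ℂ → ℂ}
    (hG : ∀ n, ContinuousOn (G n) UD) (hF : ContinuousOn F UD)
    (hsum : ∀ z ∈ UD, HasSum (fun n => c n * G n z) (F z))
    (hGb : ∀ n, BddAbove (range fun r : Ico (0:ℝ) 1 => √(meanp 2 (G n) r)))
    (hs : Summable fun n => ‖c n‖ * h2 (G n)) :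
    h2 F ≤ ∑' n, ‖c n‖ * h2 (G n) := by
  refine h2_le_of_forall_le (tsum_nonneg fun n => by positivity [h2_nonneg (G n)]) fun r hr => ?_
  refine sqrt_meanp_two_le_tsum (f := fun n z => c n * G n z)
    (fun n => (continuousOn_const.mul (hG n)).mono (sphere_subset_UD hr))
    (hF.mono (sphere_subset_UD hr)) (fun z hz => hsum z (sphere_subset_UD hr hz)) (fun n => ?_) hs
  rw [meanp_two_const_mul, Real.sqrt_mul (by positivity), Real.sqrt_sq (norm_nonneg _)]
  exact mul_le_mul_of_nonneg_left (sqrt_meanp_le_h2 (hGb n) hr) (norm_nonneg _)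

lemma bddAbove_sqrt_meanp_comp_mob {g : ℂ → ℂ} {c : ℂ} (hg : MemH2 g) (hc : c ∈ UD) :
    BddAbove (range fun s : Ico (0:ℝ) 1 => √(meanp 2 (fun z => g (mob c z) - g c) s)) := by
  obtain ⟨B, hB⟩ := hg.exists_sqrt_meanp_le
  have hc1 := mem_UD.mp hc
  refine ⟨√(4 / (1 - ‖c‖)) * (B + ‖g c‖), ?_⟩
  rintro _ ⟨⟨s, hs⟩, rfl⟩
  have hsUD : closedBall (0:ℂ) s ⊆ UD := closedBall_subset_ball hs.2
  have hmob := (differentiableOn_mob hc1).mono (closedBall_subset_closedBall hs.2.le)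
  obtain ⟨ρ₀, hρ₀, himg⟩ := exists_lt_subset_ball
    ((isCompact_closedBall 0 s).image_of_continuousOn hmob.continuousOn).isClosed
    (image_subset_iff.mpr fun z hz => mob_mem_UD hc (hsUD hz))
  -- keeping `ρ ≥ (1 + ‖c‖) / 2` bounds the Harnack constant by `4 / (1 - ‖c‖)`, uniformly in `s`
  set ρ := max ρ₀ ((1 + ‖c‖) / 2)
  have hρ : ρ ∈ Ico (0:ℝ) 1 := ⟨by positivity, max_lt hρ₀ (by linarith)⟩
  have hτρ : MapsTo (mob c) (closedBall 0 s) (ball 0 ρ) := fun z hz =>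
    ball_subset_ball (le_max_left _ _) (himg (mem_image_of_mem _ hz))
  have hρUD : closedBall (0:ℂ) ρ ⊆ UD := closedBall_subset_ball hρ.2
  have hgd := hg.1.differentiableOn
  -- squaring turns the `L²` means of `g - g c` into `L¹` means of a holomorphic function
  have hsub := circleAverage_norm_comp_le hs.1 (h := fun z => (g z - g c) ^ 2)
    ((hgd.sub_const (g c)).pow 2 |>.mono hρUD) hmob hτρ
  simp only [norm_pow, mob_zero, ← meanp_two_eq_circleAverage] at hsub
  have hC : (ρ + ‖c‖) / (ρ - ‖c‖) ≤ 4 / (1 - ‖c‖) := by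
    have : (1 + ‖c‖) / 2 ≤ ρ := le_max_right _ _
    rw [div_le_div_iff₀ (by linarith) (by linarith)]
    nlinarith [hρ.2, norm_nonneg c]
  have hgρ : ContinuousOn g (sphere 0 |ρ|) := by
    rw [abs_of_nonneg hρ.1]
    exact hgd.continuousOn.mono (sphere_subset_closedBall.trans hρUD)
  calc √(meanp 2 (fun z => g (mob c z) - g c) s)
      ≤ √((ρ + ‖c‖) / (ρ - ‖c‖) * meanp 2 (fun z => g z - g c) ρ) := Real.sqrt_le_sqrt hsub
    _ ≤ √(4 / (1 - ‖c‖)) * (√(meanp 2 g ρ) + √(meanp 2 (fun _ => g c) ρ)) := by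
        rw [Real.sqrt_mul' _ (meanp_two_nonneg _ _)]
        exact mul_le_mul (Real.sqrt_le_sqrt hC) (sqrt_meanp_two_sub_le hgρ continuousOn_const)
          (Real.sqrt_nonneg _) (Real.sqrt_nonneg _)
    _ ≤ √(4 / (1 - ‖c‖)) * (B + ‖g c‖) := by
        rw [meanp_two_const, Real.sqrt_sq (norm_nonneg _)]
        gcongr
        exact hB ρ hρ

lemma bmoaSemi_nonneg (f : ℂ → ℂ) : 0 ≤ bmoaSemi f :=
  Real.iSup_nonneg fun _ => h2_nonneg _

lemma bmoaSemi_le_tsum {g : ℕ → ℂ → ℂ} {c : ℕ → ℂ} {F : ℂ → ℂ} (hg : ∀ n, MemBMOA (g n))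
    (hF : ContinuousOn F UD) (hsum : ∀ z ∈ UD, HasSum (fun n => c n * g n z) (F z))
    (hs : Summable fun n => ‖c n‖ * bmoaSemi (g n)) :
    bmoaSemi F ≤ ∑' n, ‖c n‖ * bmoaSemi (g n) := by
  refine Real.iSup_le (fun a => ?_) (tsum_nonneg fun n => by positivity [bmoaSemi_nonneg (g n)])
  have hmobUD : MapsTo (mob a) UD UD := fun z hz => mob_mem_UD a.2 hz
  have hmobc : ContinuousOn (mob a) UD :=
    (differentiableOn_mob (mem_UD.mp a.2)).continuousOn.mono ball_subset_closedBall
  have hle : ∀ n, ‖c n‖ * h2 (fun z => g n (mob a z) - g n a) ≤ ‖c n‖ * bmoaSemi (g n) :=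
    fun n => mul_le_mul_of_nonneg_left (le_ciSup (hg n).2 a) (norm_nonneg _)
  have hs' := hs.of_nonneg_of_le
    (fun n => by positivity [h2_nonneg (fun z => g n (mob a z) - g n a)]) hle
  calc h2 (fun z => F (mob a z) - F a)
      ≤ ∑' n, ‖c n‖ * h2 (fun z => g n (mob a z) - g n a) :=
        h2_le_tsum (fun n => ((hg n).1.1.continuousOn.comp hmobc hmobUD).sub continuousOn_const)
          ((hF.comp hmobc hmobUD).sub continuousOn_const)
          (fun z hz => by simpa only [mul_sub] using (hsum _ (hmobUD hz)).sub (hsum a a.2))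
          (fun n => bddAbove_sqrt_meanp_comp_mob (hg n).1 a.2) hs'
    _ ≤ ∑' n, ‖c n‖ * bmoaSemi (g n) := hs'.tsum_le_tsum hle hs

lemma memBMOA_and_bmoaSemi_le_of_norm_le {f : ℂ → ℂ} {C : ℝ} (hf : AnalyticOn ℂ f UD)
    (hC : ∀ z ∈ UD, ‖f z‖ ≤ C) : MemBMOA f ∧ bmoaSemi f ≤ 2 * C := by
  have hC0 : 0 ≤ C := (norm_nonneg _).trans (hC 0 (mem_ball_self one_pos))
  have hosc : ∀ a : UD, h2 (fun z => f (mob a z) - f a) ≤ 2 * C := fun a =>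
    h2_le_of_forall_le (by positivity) fun r hr => sqrt_meanp_le_of_forall_norm_le (by positivity)
      fun z hz => (norm_sub_le _ _).trans (by
        linarith [hC _ (mob_mem_UD a.2 (sphere_subset_UD hr hz)), hC a a.2])
  refine ⟨⟨⟨hf, C, ?_⟩, 2 * C, ?_⟩, Real.iSup_le hosc (by positivity)⟩
  · rintro _ ⟨r, rfl⟩
    simpa [Real.sqrt_eq_rpow] using
      sqrt_meanp_le_of_forall_norm_le hC0 fun z hz => hC z (sphere_subset_UD r.2 hz)
  · rintro _ ⟨a, rfl⟩
    exact hosc a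

lemma BoundedOnBMOA.exists_forall_bmoaSemi_mul_pow_le {ψ φ : ℂ → ℂ} (hW : BoundedOnBMOA ψ φ) :
    ∃ K, ∀ n : ℕ, MemBMOA (fun z => ψ z * φ z ^ (n + 1))
      ∧ bmoaSemi (fun z => ψ z * φ z ^ (n + 1)) ≤ K := by
  obtain ⟨M, hM0, hM⟩ := hW
  refine ⟨M * 2, fun n => ?_⟩
  obtain ⟨hpow, hpow_le⟩ := memBMOA_and_bmoaSemi_le_of_norm_le (f := fun z => z ^ (n + 1))
    (C := 1) (analyticOn_id.pow _) fun z hz => by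
      simpa using pow_le_one₀ (norm_nonneg z) (mem_UD.mp hz).le
  obtain ⟨hmem, hle⟩ := hM _ hpow
  refine ⟨hmem, ?_⟩
  calc bmoaSemi (fun z => ψ z * φ z ^ (n + 1))
      ≤ bmoaNorm (wcomp ψ φ fun z => z ^ (n + 1)) := le_add_of_nonneg_left (norm_nonneg _)
    _ ≤ M * bmoaNorm fun z => z ^ (n + 1) := hle
    _ ≤ M * 2 := by
        gcongr
        simpa [bmoaNorm] using hpow_le

lemma summable_mul_geometric {x K : ℝ} {v : ℕ → ℝ} (hx0 : 0 ≤ x) (hx1 : x < 1)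
    (hv0 : ∀ n, 0 ≤ v n) (hvK : ∀ n, v n ≤ K) :
    Summable fun n => (1 - x ^ 2) * x ^ n * v n := by
  have hx2 : 0 ≤ 1 - x ^ 2 := by nlinarith
  refine ((summable_geometric_of_lt_one hx0 hx1).mul_left ((1 - x ^ 2) * K)).of_nonneg_of_le
    (fun n => by positivity [hv0 n]) fun n => ?_
  rw [mul_right_comm _ K]
  exact mul_le_mul_of_nonneg_left (hvK n) (by positivity)

lemma tsum_mul_geometric_le {x K L : ℝ} {N : ℕ} {v : ℕ → ℝ} (hx0 : 0 ≤ x) (hx1 : x < 1)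
    (hv0 : ∀ n, 0 ≤ v n) (hvK : ∀ n, v n ≤ K) (hvL : ∀ n ≥ N, v n ≤ L) :
    ∑' n, (1 - x ^ 2) * x ^ n * v n ≤ 2 * (1 - x) * N * K + 2 * L := by
  have hx2 : 0 ≤ 1 - x ^ 2 := by nlinarith
  have hs := summable_mul_geometric hx0 hx1 hv0 hvK
  rw [← hs.sum_add_tsum_nat_add N]
  have hhead : ∑ n ∈ Finset.range N, (1 - x ^ 2) * x ^ n * v n ≤ N * (2 * (1 - x) * K) := by
    refine (Finset.sum_le_card_nsmul _ _ _ fun n _ => ?_).trans_eq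
      (by rw [Finset.card_range, nsmul_eq_mul])
    have hK0 : 0 ≤ K := (hv0 n).trans (hvK n)
    calc (1 - x ^ 2) * x ^ n * v n ≤ (1 - x ^ 2) * 1 * K :=
          mul_le_mul (mul_le_mul_of_nonneg_left (pow_le_one₀ hx0 hx1.le) hx2) (hvK n) (hv0 n)
            (by positivity)
      _ ≤ 2 * (1 - x) * K := by
          nlinarith [mul_nonneg (mul_nonneg (sub_nonneg.mpr hx1.le) (sub_nonneg.mpr hx1.le)) hK0]
  have htail : ∑' i, (1 - x ^ 2) * x ^ (i + N) * v (i + N) ≤ 2 * L := by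
    have hL0 : 0 ≤ L := (hv0 N).trans (hvL N le_rfl)
    calc ∑' i, (1 - x ^ 2) * x ^ (i + N) * v (i + N)
        ≤ ∑' i, (1 - x ^ 2) * L * x ^ i :=
          ((summable_nat_add_iff N).mpr hs).tsum_le_tsum (fun i => by
            nlinarith [mul_le_mul_of_nonneg_left (mul_le_mul
              (pow_le_pow_of_le_one hx0 hx1.le (Nat.le_add_right i N))
              (hvL (i + N) (Nat.le_add_left N i)) (hv0 _) (pow_nonneg hx0 i)) hx2])
            ((summable_geometric_of_lt_one hx0 hx1).mul_left _)
      _ = (1 + x) * L := by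
          rw [tsum_mul_left, tsum_geometric_of_lt_one hx0 hx1]
          field_simp [(sub_pos.mpr hx1).ne']
          ring
      _ ≤ 2 * L := by nlinarith
  nlinarith

lemma bmoaSemi_wcomp_testF_le {ψ φ : ℂ → ℂ} {K : ℝ} (hψ : AnalyticOn ℂ ψ UD) (hφ : SelfMap φ)
    (hK : ∀ n : ℕ, MemBMOA (fun z => ψ z * φ z ^ (n + 1))
      ∧ bmoaSemi (fun z => ψ z * φ z ^ (n + 1)) ≤ K) {a : ℂ} (ha : a ∈ UD) :
    bmoaSemi (wcomp ψ φ (testF φ a))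
      ≤ ∑' n, (1 - ‖φ a‖ ^ 2) * ‖φ a‖ ^ n * bmoaSemi (fun z => ψ z * φ z ^ (n + 1)) := by
  have hb : ‖φ a‖ < 1 := mem_UD.mp (hφ.2 ha)
  have hsum : ∀ z ∈ UD, HasSum
      (fun n => ((‖φ a‖ ^ 2 - 1 : ℝ) : ℂ) * conj (φ a) ^ n * (ψ z * φ z ^ (n + 1)))
      (wcomp ψ φ (testF φ a) z) := fun z hz => by
    simpa [wcomp, testF, mul_comm, mul_left_comm, mul_assoc]
      using (hasSum_mob_sub hb (mem_UD.mp (hφ.2 hz))).mul_left (ψ z)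
  have hF : ContinuousOn (wcomp ψ φ (testF φ a)) UD :=
    hψ.continuousOn.mul (((differentiableOn_mob hb).continuousOn.comp hφ.1.continuousOn
      fun z hz => ball_subset_closedBall (hφ.2 hz)).sub continuousOn_const)
  have hnorm : ∀ n : ℕ,
      ‖((‖φ a‖ ^ 2 - 1 : ℝ) : ℂ) * conj (φ a) ^ n‖ = (1 - ‖φ a‖ ^ 2) * ‖φ a‖ ^ n := fun n => by
    rw [norm_mul, norm_pow, RCLike.norm_conj, Complex.norm_real,
      Real.norm_of_nonpos (by nlinarith [norm_nonneg (φ a)])]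
    ring
  simpa only [hnorm] using bmoaSemi_le_tsum (fun n => (hK n).1) hF hsum (by
    simpa only [hnorm] using summable_mul_geometric (norm_nonneg _) hb
      (fun n => bmoaSemi_nonneg _) fun n => (hK n).2)

/-- `limsup_{|φ(a)|→1} ‖W_{ψ,φ} f_a‖_* ≤ 2 limsup_n ‖ψ φⁿ‖_*`. -/
theorem stmt4 :
    ∀ ψ φ : ℂ → ℂ, AnalyticOn ℂ ψ UD → SelfMap φ → BoundedOnBMOA ψ φ →
      ∀ ε > (0:ℝ), ∃ r : ℝ, r < 1 ∧ ∀ a ∈ UD, r < ‖φ a‖ →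
        bmoaSemi (wcomp ψ φ (testF φ a)) ≤
          2 * Filter.limsup (fun n : ℕ => bmoaSemi (fun z => ψ z * φ z ^ n)) atTop + ε := by
  intro ψ φ hψ hφ hW ε hε
  obtain ⟨K, hK⟩ := hW.exists_forall_bmoaSemi_mul_pow_le
  set u := fun n : ℕ => bmoaSemi (fun z => ψ z * φ z ^ n)
  have hK0 : 0 ≤ K := (bmoaSemi_nonneg _).trans (hK 0).2
  have hbdd : IsBoundedUnder (· ≤ ·) atTop u :=
    isBoundedUnder_of_eventually_le (eventually_atTop.mpr ⟨1, fun n hn => by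
      simpa [u, Nat.sub_add_cancel hn] using (hK (n - 1)).2⟩)
  obtain ⟨N, hN⟩ := eventually_atTop.mp
    (eventually_lt_of_limsup_lt (lt_add_of_pos_right _ (by positivity : 0 < ε / 4)) hbdd)
  refine ⟨1 - ε / (4 * (N * K + 1)), sub_lt_self _ (by positivity), fun a ha hra => ?_⟩
  have hb : ‖φ a‖ < 1 := mem_UD.mp (hφ.2 ha)
  have hdist : (1 - ‖φ a‖) * (4 * (N * K + 1)) < ε :=
    (lt_div_iff₀ (by positivity)).mp (by linarith)
  calc bmoaSemi (wcomp ψ φ (testF φ a))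
      ≤ ∑' n, (1 - ‖φ a‖ ^ 2) * ‖φ a‖ ^ n * u (n + 1) := bmoaSemi_wcomp_testF_le hψ hφ hK ha
    _ ≤ 2 * (1 - ‖φ a‖) * N * K + 2 * (limsup u atTop + ε / 4) :=
        tsum_mul_geometric_le (norm_nonneg _) hb (fun n => bmoaSemi_nonneg _) (fun n => (hK n).2)
          fun n hn => (hN (n + 1) (by omega)).le
    _ ≤ 2 * limsup u atTop + ε := by
        nlinarith [mul_nonneg (sub_nonneg.mpr hb.le) (by positivity : (0:ℝ) ≤ N * K)]
end

section
/- Let φ be an analytic self-map of 𝔻, a ∈ 𝔻, and t ∈ (0,1). Set φ_a = σ_{φ(a)}∘φ∘σ_a and let s(r) = 2(1+r)/(1-r). If |φ(a)| ≤ r and 1 - s(r)^{-1} < t < 1, then {ξ ∈ ∂𝔻 : |(φ∘σ_a)(ξ)| > 1 - s(r)^{-1}(1-t)} ⊆ {ξ ∈ ∂𝔻 : |φ_a(ξ)| > t} ⊆ {ξ ∈ ∂𝔻 : |(φ∘σ_a)(ξ)| > 1 - s(r)(1-t)} (in terms of radial boundary values, almost everywhere on ∂𝔻). -/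
open Complex MeasureTheory Filter Set

/-!
With `D = |1 - b̄w|` and `N = |b - w|` one has `D² - N² = (1 - |b|²)(1 - |w|²)`, hence
`1 - |σ_b(w)| = (1 - |b|²)(1 - |w|²) / (D(D + N))`. Bounding `D` and `D + N` above and below in
terms of `|b|` and `|w|` gives
`(1 - |b|)/2 · (1 - |w|) ≤ 1 - |σ_b(w)| ≤ (1 + |b|)/(1 - |b|) · (1 - |w|)` for `|w| ≤ 1`,
so `s(r)⁻¹(1 - |w|) ≤ 1 - |σ_b(w)| ≤ s(r)(1 - |w|)` when `|b| ≤ r`. The radial limit `w` of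
`φ ∘ σ_a` lies in the closed disc, and both inclusions are this estimate at `b = φ(a)`, rearranged.
-/

lemma norm_sq_one_sub_conj_mul_sub_norm_sq_sub (b w : ℂ) :
    ‖1 - (starRingEnd ℂ) b * w‖ ^ 2 - ‖b - w‖ ^ 2 = (1 - ‖b‖ ^ 2) * (1 - ‖w‖ ^ 2) := by
  simp only [Complex.sq_norm, Complex.normSq_apply, Complex.sub_re, Complex.sub_im,
    Complex.mul_re, Complex.mul_im, Complex.one_re, Complex.one_im, Complex.conj_re,
    Complex.conj_im]
  ring

lemma one_sub_norm_mul_le_norm_one_sub_conj_mul (b w : ℂ) :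
    1 - ‖b‖ * ‖w‖ ≤ ‖1 - (starRingEnd ℂ) b * w‖ := by
  simpa using norm_sub_norm_le (1 : ℂ) ((starRingEnd ℂ) b * w)

lemma norm_one_sub_conj_mul_le (b w : ℂ) :
    ‖1 - (starRingEnd ℂ) b * w‖ ≤ 1 + ‖b‖ * ‖w‖ := by
  simpa using norm_sub_le (1 : ℂ) ((starRingEnd ℂ) b * w)

section MobiusEstimates

variable {b w : ℂ}

lemma norm_one_sub_conj_mul_pos (hb : ‖b‖ < 1) (hw : ‖w‖ ≤ 1) :
    0 < ‖1 - (starRingEnd ℂ) b * w‖ := by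
  have := one_sub_norm_mul_le_norm_one_sub_conj_mul b w
  nlinarith [norm_nonneg b, norm_nonneg w]

lemma one_sub_norm_mob_eq (hb : ‖b‖ < 1) (hw : ‖w‖ ≤ 1) :
    1 - ‖mob b w‖ = (1 - ‖b‖ ^ 2) * (1 - ‖w‖ ^ 2) /
      (‖1 - (starRingEnd ℂ) b * w‖ * (‖1 - (starRingEnd ℂ) b * w‖ + ‖b - w‖)) := by
  have hD := norm_one_sub_conj_mul_pos hb hw
  rw [← norm_sq_one_sub_conj_mul_sub_norm_sq_sub, mob, norm_div]
  generalize ‖1 - (starRingEnd ℂ) b * w‖ = D at hD ⊢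
  have hDN : 0 < D + ‖b - w‖ := by positivity
  field_simp
  ring

lemma one_sub_norm_mob_le (hb : ‖b‖ < 1) (hw : ‖w‖ ≤ 1) :
    1 - ‖mob b w‖ ≤ (1 + ‖b‖) / (1 - ‖b‖) * (1 - ‖w‖) := by
  have hD := one_sub_norm_mul_le_norm_one_sub_conj_mul b w
  have hN : ‖w‖ - ‖b‖ ≤ ‖b - w‖ := by simpa [norm_sub_rev] using norm_sub_norm_le w b
  have hb' : 0 < 1 - ‖b‖ := by linarith
  have hDb : 1 - ‖b‖ ≤ ‖1 - (starRingEnd ℂ) b * w‖ := by nlinarith [norm_nonneg b]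
  calc 1 - ‖mob b w‖
      = (1 - ‖b‖ ^ 2) * (1 - ‖w‖ ^ 2) /
          (‖1 - (starRingEnd ℂ) b * w‖ * (‖1 - (starRingEnd ℂ) b * w‖ + ‖b - w‖)) :=
        one_sub_norm_mob_eq hb hw
    _ ≤ (1 - ‖b‖ ^ 2) * (1 - ‖w‖ ^ 2) / ((1 - ‖b‖) * ((1 - ‖b‖) * (1 + ‖w‖))) := by
        have : 0 ≤ 1 - ‖w‖ ^ 2 := by nlinarith [norm_nonneg w]
        have : 0 ≤ 1 - ‖b‖ ^ 2 := by nlinarith [norm_nonneg b]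
        gcongr
        nlinarith [norm_nonneg b, norm_nonneg w]
    _ = (1 + ‖b‖) / (1 - ‖b‖) * (1 - ‖w‖) := by
        field_simp
        ring

lemma le_one_sub_norm_mob (hb : ‖b‖ < 1) (hw : ‖w‖ ≤ 1) :
    (1 - ‖b‖) / 2 * (1 - ‖w‖) ≤ 1 - ‖mob b w‖ := by
  have hD := norm_one_sub_conj_mul_le b w
  have hD₀ := norm_one_sub_conj_mul_pos hb hw
  have hN : ‖b - w‖ ≤ ‖b‖ + ‖w‖ := norm_sub_le b w
  calc (1 - ‖b‖) / 2 * (1 - ‖w‖)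
      = (1 - ‖b‖ ^ 2) * (1 - ‖w‖ ^ 2) / (2 * ((1 + ‖b‖) * (1 + ‖w‖))) := by
        field_simp
        ring
    _ ≤ (1 - ‖b‖ ^ 2) * (1 - ‖w‖ ^ 2) /
          (‖1 - (starRingEnd ℂ) b * w‖ * (‖1 - (starRingEnd ℂ) b * w‖ + ‖b - w‖)) := by
        have : 0 ≤ 1 - ‖w‖ ^ 2 := by nlinarith [norm_nonneg w]
        have : 0 ≤ 1 - ‖b‖ ^ 2 := by nlinarith [norm_nonneg b]
        gcongr
        · nlinarith [norm_nonneg b, norm_nonneg w]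
        · nlinarith [norm_nonneg b, norm_nonneg w]
    _ = 1 - ‖mob b w‖ := (one_sub_norm_mob_eq hb hw).symm

end MobiusEstimates

lemma mapsTo_mob {a : ℂ} (ha : a ∈ UD) : MapsTo (mob a) UD UD := by
  intro z hz
  simp only [UD, Metric.mem_ball, dist_zero_right] at ha hz ⊢
  have hD := norm_one_sub_conj_mul_pos ha hz.le
  have hpos : 0 < 1 - ‖mob a z‖ := by
    rw [one_sub_norm_mob_eq ha hz.le]
    have : 0 < 1 - ‖a‖ ^ 2 := by nlinarith [norm_nonneg a]
    have : 0 < 1 - ‖z‖ ^ 2 := by nlinarith [norm_nonneg z]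
    positivity
  linarith

lemma norm_le_one_of_hasRadialLimit {f : ℂ → ℂ} {ξ w : ℂ} (hf : MapsTo f UD UD)
    (hξ : ‖ξ‖ ≤ 1) (h : HasRadialLimit f ξ w) : ‖w‖ ≤ 1 := by
  refine le_of_tendsto h.norm ?_
  filter_upwards [Ioo_mem_nhdsLT (show (0:ℝ) < 1 by norm_num)] with ρ hρ
  have hρξ : (ρ : ℂ) * ξ ∈ UD := by
    simp only [UD, Metric.mem_ball, dist_zero_right, norm_mul, Complex.norm_real,
      Real.norm_eq_abs, abs_of_pos hρ.1]
    nlinarith [hρ.1, hρ.2, norm_nonneg ξ]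
  have := hf hρξ
  simp only [UD, Metric.mem_ball, dist_zero_right] at this
  exact this.le

section SFun

variable {r : ℝ} {b w : ℂ}

lemma sFun_pos (hr₀ : -1 < r) (hr : r < 1) : 0 < sFun r :=
  div_pos (by linarith) (by linarith)

lemma one_sub_norm_mob_le_sFun_mul (hb : ‖b‖ ≤ r) (hr : r < 1) (hw : ‖w‖ ≤ 1) :
    1 - ‖mob b w‖ ≤ sFun r * (1 - ‖w‖) := by
  have hb₁ : ‖b‖ < 1 := hb.trans_lt hr
  refine (one_sub_norm_mob_le hb₁ hw).trans ?_
  have hs : (1 + ‖b‖) / (1 - ‖b‖) ≤ sFun r := by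
    rw [sFun, div_le_div_iff₀ (by linarith) (by linarith)]
    nlinarith [norm_nonneg b]
  gcongr

lemma inv_sFun_mul_le_one_sub_norm_mob (hb : ‖b‖ ≤ r) (hr : r < 1) (hw : ‖w‖ ≤ 1) :
    (sFun r)⁻¹ * (1 - ‖w‖) ≤ 1 - ‖mob b w‖ := by
  have hb₁ : ‖b‖ < 1 := hb.trans_lt hr
  refine le_trans ?_ (le_one_sub_norm_mob hb₁ hw)
  have hs : (sFun r)⁻¹ ≤ (1 - ‖b‖) / 2 := by
    rw [sFun, inv_div, div_le_div_iff₀ (by nlinarith [norm_nonneg b]) (by norm_num)]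
    nlinarith [norm_nonneg b]
  gcongr

end SFun

/-- boundary level-set inclusions for `φ_a = σ_{φ(a)} ∘ φ ∘ σ_a`, via radial limits. -/
theorem stmt9 :
    ∀ φ : ℂ → ℂ, SelfMap φ → ∀ r : ℝ, r < 1 → ∀ a ∈ UD, ‖φ a‖ ≤ r →
      ∀ t : ℝ, 1 - (sFun r)⁻¹ < t → t < 1 →
        ∀ ξ : ℂ, ‖ξ‖ = 1 → ∀ w : ℂ, HasRadialLimit (fun z => φ (mob a z)) ξ w →
          (1 - (sFun r)⁻¹ * (1 - t) < ‖w‖ → t < ‖mob (φ a) w‖) ∧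
          (t < ‖mob (φ a) w‖ → 1 - sFun r * (1 - t) < ‖w‖) := by
  intro φ hφ r hr a ha hφa t _ _ ξ hξ w hw
  have hw₁ : ‖w‖ ≤ 1 := norm_le_one_of_hasRadialLimit (hφ.2.comp (mapsTo_mob ha)) hξ.le hw
  have hs : 0 < sFun r := sFun_pos (by linarith [norm_nonneg (φ a)]) hr
  have hupper := one_sub_norm_mob_le_sFun_mul hφa hr hw₁
  have hlower := inv_sFun_mul_le_one_sub_norm_mob hφa hr hw₁
  constructor
  · intro h
    have := (lt_inv_mul_iff₀ hs).1 (show 1 - ‖w‖ < (sFun r)⁻¹ * (1 - t) by linarith)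
    linarith
  · intro h
    have := (inv_mul_lt_iff₀ hs).1 (show (sFun r)⁻¹ * (1 - ‖w‖) < 1 - t by linarith)
    linarith
end
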